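/- arXiv:2111.14580 — 3 statements merged into one kernel-verified Lean document; each statement's English description precedes it below -/
import Mathlib

section
/- For all real numbers b with 0 ≤ b < 1 and all natural numbers n ≥ 1, one has n·b²·(1-b)^{n-1} ≤ (1 - b/2)^{n-1}. -/
lemma aux3 : ∀ n : ℕ, ∀ u : ℝ, 0 ≤ u → u ≤ 1/2 →
    4 * ((n : ℝ) + 3) * u ^ 2 * (1 - u) ^ (n + 2) ≤ 1 := by
  intro n
  induction n with
  | zero =>
    intro u h0 h2
    norm_num
    nlinarith [sq_nonneg (1 - 2*u), mul_nonneg h0 (by linarith : (0:ℝ) ≤ 1 - u),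
      mul_nonneg (mul_nonneg h0 (by linarith : (0:ℝ) ≤ 1 - u)) (sq_nonneg (1 - 2*u))]
  | succ k ih =>
    intro u h0 h2
    push_cast
    have hK : (0:ℝ) < (k:ℝ) + 3 := by positivity
    have hP : (0:ℝ) ≤ (1 - u) ^ (k + 2) := by
      apply pow_nonneg; linarith
    have hrw : (1 - u) ^ (k + 1 + 2) = (1 - u) ^ (k + 2) * (1 - u) := by
      rw [pow_succ]
    rcases le_or_gt u (1 / ((k:ℝ) + 4)) with h | h
    · -- small u case
      have hpow1 : (1 - u) ^ (k + 1 + 2) ≤ 1 := by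
        apply pow_le_one₀ (by linarith) (by linarith)
      have hu2 : u ^ 2 ≤ (1 / ((k:ℝ) + 4)) ^ 2 := by
        apply pow_le_pow_left₀ h0 h
      have hc : 4 * ((k:ℝ) + 1 + 3) * u ^ 2 ≤ 4 / ((k:ℝ) + 4) := by
        rw [div_pow, one_pow] at hu2
        rw [div_eq_mul_inv]
        have h4 : (0:ℝ) < ((k:ℝ) + 4) ^ 2 := by positivity
        have := mul_le_mul_of_nonneg_left hu2 (by positivity : (0:ℝ) ≤ 4 * ((k:ℝ) + 1 + 3))
        calc 4 * ((k:ℝ) + 1 + 3) * u ^ 2 ≤ 4 * ((k:ℝ) + 1 + 3) * (1 / ((k:ℝ) + 4) ^ 2) := this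
          _ = 4 * (((k:ℝ) + 4))⁻¹ := by
              field_simp
              ring
    -- combine
      have hc2 : 4 / ((k:ℝ) + 4) ≤ 1 := by
        rw [div_le_one (by positivity)]
        linarith
      have hco : (0:ℝ) ≤ 4 * ((k:ℝ) + 1 + 3) * u ^ 2 := by positivity
      calc 4 * ((k:ℝ) + 1 + 3) * u ^ 2 * (1 - u) ^ (k + 1 + 2)
          ≤ 4 * ((k:ℝ) + 1 + 3) * u ^ 2 * 1 := by
            apply mul_le_mul_of_nonneg_left hpow1 hco
        _ ≤ 1 := by rw [mul_one]; linarith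
    · -- large u case, use ih
      have h1 := ih u h0 h2
      have hmul := mul_le_mul_of_nonneg_right h1
        (by nlinarith : (0:ℝ) ≤ ((k:ℝ) + 4) * (1 - u))
      -- hmul : 4*(k+3)*u^2*(1-u)^(k+2) * ((k+4)*(1-u)) ≤ 1 * ((k+4)*(1-u))
      have hub : ((k:ℝ) + 4) * (1 - u) ≤ (k:ℝ) + 3 := by
        have : 1 / ((k:ℝ) + 4) < u := h
        rw [div_lt_iff₀ (by positivity)] at this
        nlinarith
      rw [hrw]
      push_cast
      have key : (4 * ((k:ℝ) + 1 + 3) * u ^ 2 * ((1 - u) ^ (k + 2) * (1 - u))) * ((k:ℝ) + 3)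
          = 4 * ((k:ℝ) + 3) * u ^ 2 * (1 - u) ^ (k + 2) * (((k:ℝ) + 4) * (1 - u)) := by
        ring
      have : (4 * ((k:ℝ) + 1 + 3) * u ^ 2 * ((1 - u) ^ (k + 2) * (1 - u))) * ((k:ℝ) + 3)
          ≤ 1 * ((k:ℝ) + 3) := by
        rw [key]
        calc 4 * ((k:ℝ) + 3) * u ^ 2 * (1 - u) ^ (k + 2) * (((k:ℝ) + 4) * (1 - u))
            ≤ 1 * (((k:ℝ) + 4) * (1 - u)) := hmul
          _ ≤ 1 * ((k:ℝ) + 3) := by rw [one_mul, one_mul]; exact hub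
      exact le_of_mul_le_mul_right (by linarith) hK

lemma aux_full (n : ℕ) (hn : 1 ≤ n) (u : ℝ) (h0 : 0 ≤ u) (h2 : u ≤ 1/2) :
    4 * (n : ℝ) * u ^ 2 * (1 - u) ^ (n - 1) ≤ 1 := by
  match n, hn with
  | 1, _ => norm_num; nlinarith
  | 2, _ => norm_num; nlinarith [sq_nonneg (1 - 2*u)]
  | (m + 3), _ =>
    have := aux3 m u h0 h2
    have hcast : ((m + 3 : ℕ) : ℝ) = (m : ℝ) + 3 := by push_cast; ring
    rw [hcast]
    simpa using this

theorem stmt_0 (b : ℝ) (hb0 : 0 ≤ b) (hb1 : b < 1) (n : ℕ) (hn : 1 ≤ n) :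
    (n : ℝ) * b ^ 2 * (1 - b) ^ (n - 1) ≤ (1 - b / 2) ^ (n - 1) := by
  have hb2 : 0 ≤ 1 - b := by linarith
  have hq : 0 ≤ 1 - b / 2 := by linarith
  have hsq : 1 - b ≤ (1 - b / 2) ^ 2 := by nlinarith [sq_nonneg b]
  have hpow : (1 - b) ^ (n - 1) ≤ ((1 - b / 2) ^ 2) ^ (n - 1) :=
    pow_le_pow_left₀ hb2 hsq (n - 1)
  have hsplit : ((1 - b / 2) ^ 2) ^ (n - 1) = (1 - b / 2) ^ (n - 1) * (1 - b / 2) ^ (n - 1) := by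
    rw [← pow_mul, two_mul, pow_add]
  have haux := aux_full n hn (b / 2) (by linarith) (by linarith)
  have hPn : (0:ℝ) ≤ (1 - b / 2) ^ (n - 1) := pow_nonneg hq _
  have hcoef : (0:ℝ) ≤ (n : ℝ) * b ^ 2 := by positivity
  calc (n : ℝ) * b ^ 2 * (1 - b) ^ (n - 1)
      ≤ (n : ℝ) * b ^ 2 * (((1 - b / 2) ^ (n - 1)) * ((1 - b / 2) ^ (n - 1))) := by
        rw [← hsplit]
        exact mul_le_mul_of_nonneg_left hpow hcoef
    _ = (4 * (n : ℝ) * (b / 2) ^ 2 * (1 - b / 2) ^ (n - 1)) * (1 - b / 2) ^ (n - 1) := by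
        ring
    _ ≤ 1 * (1 - b / 2) ^ (n - 1) := mul_le_mul_of_nonneg_right haux hPn
    _ = (1 - b / 2) ^ (n - 1) := one_mul _
end

section
/- For 0 ≤ b < 1, the function h(b) = log((1 - b/2)/(1 - b)) - b² is nonnegative on [0,1). -/
theorem stmt_1 (b : ℝ) (hb0 : 0 ≤ b) (hb1 : b < 1) :
    0 ≤ Real.log ((1 - b / 2) / (1 - b)) - b ^ 2 := by
  have h1 : (0:ℝ) < 1 - b := by linarith
  have h2 : (0:ℝ) < 1 - b / 2 := by linarith
  have hx : (0:ℝ) < (1 - b / 2) / (1 - b) := by positivity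
  have hinv : Real.log ((1 - b) / (1 - b / 2)) ≤ (1 - b) / (1 - b / 2) - 1 :=
    Real.log_le_sub_one_of_pos (by positivity)
  have hlog : Real.log ((1 - b) / (1 - b / 2)) = - Real.log ((1 - b / 2) / (1 - b)) := by
    rw [Real.log_div h1.ne' h2.ne', Real.log_div h2.ne' h1.ne']; ring
  rw [hlog] at hinv
  have key : b ^ 2 ≤ 1 - (1 - b) / (1 - b / 2) := by
    rw [le_sub_iff_add_le, ← le_sub_iff_add_le', div_le_iff₀ h2]
    nlinarith [mul_nonneg hb0 (sq_nonneg (1 - b))]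
  linarith
end

section
/- Let L be an L-smooth function (∇L is L-Lipschitz) bounded below, and suppose iterates satisfy x_k = x_{k-1} - γψ̂_{k-1} with 0 < γ ≤ 1/L, where conditionally on x_{k-1}, E[ψ̂_{k-1}] = ψ_{k-1}. Then E[L(x_k) - L(x_{k-1})] ≤ -(γ/2)E[‖∇L(x_{k-1})‖²] + (Lγ²/2)(V_{k-1} + B_{k-1}) + γ·E[‖∇L(x_{k-1})‖²]^{1/2}·B_{k-1}^{1/2}, where V_{k-1} = E[‖ψ̂_{k-1} - ψ_{k-1}‖²] and B_{k-1} = E[‖ψ_{k-1} - ∇L(x_{k-1})‖²]. -/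
open MeasureTheory

open InnerProductSpace in
lemma descent_aux {E : Type*} [NormedAddCommGroup E] [InnerProductSpace ℝ E]
    [CompleteSpace E]
    (Lf : E → ℝ) (G : E → E) (ℓ : ℝ) (hℓ : 0 < ℓ)
    (hgrad : ∀ x, HasGradientAt Lf (G x) x)
    (hlip : ∀ x x', ‖G x - G x'‖ ≤ ℓ * ‖x - x'‖)
    (x y : E) :
    Lf y ≤ Lf x + inner ℝ (G x) (y - x) + ℓ / 2 * ‖y - x‖ ^ 2 := by
  set v := y - x with hv
  have hGcont : Continuous G := by
    refine (LipschitzWith.of_dist_le_mul (K := ℓ.toNNReal) ?_).continuous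
    intro a b
    rw [dist_eq_norm, dist_eq_norm, Real.coe_toNNReal _ hℓ.le]
    exact hlip a b
  have hderiv : ∀ t : ℝ, HasDerivAt (fun t : ℝ => Lf (x + t • v))
      (inner ℝ (G (x + t • v)) v : ℝ) t := by
    intro t
    have h1 : HasDerivAt (fun t : ℝ => x + t • v) v t := by
      simpa using ((hasDerivAt_id t).smul_const v).const_add x
    have h2 := (hasGradientAt_iff_hasFDerivAt.1 (hgrad (x + t • v))).comp_hasDerivAt t h1
    simpa [toDual_apply_apply, Function.comp_def] using h2
  have hcont : Continuous fun t : ℝ => (inner ℝ (G (x + t • v)) v : ℝ) := by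
    apply Continuous.inner
    · exact hGcont.comp (by continuity)
    · exact continuous_const
  have hftc : Lf (x + (1:ℝ) • v) - Lf (x + (0:ℝ) • v) =
      ∫ t in (0:ℝ)..1, (inner ℝ (G (x + t • v)) v : ℝ) := by
    rw [← intervalIntegral.integral_eq_sub_of_hasDerivAt (fun t _ => hderiv t)
      (hcont.intervalIntegrable 0 1)]
  have hbound : ∫ t in (0:ℝ)..1, (inner ℝ (G (x + t • v)) v : ℝ) ≤
      ∫ t in (0:ℝ)..1, ((inner ℝ (G x) v : ℝ) + ℓ * t * ‖v‖ ^ 2) := by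
    apply intervalIntegral.integral_mono_on zero_le_one
      (hcont.intervalIntegrable 0 1)
      ((by continuity : Continuous fun t : ℝ => (inner ℝ (G x) v : ℝ) + ℓ * t * ‖v‖ ^ 2).intervalIntegrable 0 1)
    intro t ht
    have : (inner ℝ (G (x + t • v)) v : ℝ) - inner ℝ (G x) v = inner ℝ (G (x + t • v) - G x) v := by
      rw [inner_sub_left]
    have hcs : (inner ℝ (G (x + t • v) - G x) v : ℝ) ≤ ‖G (x + t • v) - G x‖ * ‖v‖ :=
      real_inner_le_norm _ _
    have hl : ‖G (x + t • v) - G x‖ ≤ ℓ * (t * ‖v‖) := by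
      have := hlip (x + t • v) x
      simpa [norm_smul, abs_of_nonneg ht.1] using this
    nlinarith [norm_nonneg v, norm_nonneg (G (x + t • v) - G x), mul_nonneg (mul_nonneg hℓ.le ht.1) (sq_nonneg ‖v‖)]
  have hint : ∫ t in (0:ℝ)..1, ((inner ℝ (G x) v : ℝ) + ℓ * t * ‖v‖ ^ 2) =
      inner ℝ (G x) v + ℓ / 2 * ‖v‖ ^ 2 := by
    rw [intervalIntegral.integral_add intervalIntegrable_const
      (((intervalIntegral.intervalIntegrable_id).const_mul ℓ).mul_const (‖v‖^2))]
    rw [intervalIntegral.integral_mul_const, intervalIntegral.integral_const_mul,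
      integral_id, intervalIntegral.integral_const]
    simp
    exact Or.inl (by ring)
  have := hftc ▸ le_of_eq hftc
  simp only [one_smul, zero_smul, add_zero] at hftc
  have : Lf y - Lf x ≤ inner ℝ (G x) v + ℓ / 2 * ‖v‖ ^ 2 := by
    rw [hv] at hftc ⊢
    have : x + (y - x) = y := by abel
    rw [this] at hftc
    linarith [hbound.trans_eq hint, hftc.le, hftc.ge]
  linarith

/-- One-step descent inequality for biased SGD on an `L`-smooth function (non-convex case). -/
theorem stmt_12 {E : Type*} [NormedAddCommGroup E] [InnerProductSpace ℝ E]
    [CompleteSpace E] [MeasurableSpace E] [BorelSpace E]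
    {Ω : Type*} [MeasurableSpace Ω] (P : Measure Ω) [IsProbabilityMeasure P]
    (Lf : E → ℝ) (G : E → E) (ℓ : ℝ) (hℓ : 0 < ℓ)
    (hgrad : ∀ x, HasGradientAt Lf (G x) x)
    (hlip : ∀ x x', ‖G x - G x'‖ ≤ ℓ * ‖x - x'‖)
    (hbdd : BddBelow (Set.range Lf))
    (γ : ℝ) (hγ0 : 0 < γ) (hγ : γ ≤ 1 / ℓ)
    (x : E) (ψhat : Ω → E) (ψ : E)
    (hψint : Integrable ψhat P)
    (hmean : (∫ ω, ψhat ω ∂P) = ψ)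
    (hVint : Integrable (fun ω => ‖ψhat ω - ψ‖ ^ 2) P)
    (hLint : Integrable (fun ω => Lf (x - γ • ψhat ω)) P)
    (V B : ℝ)
    (hV : V = ∫ ω, ‖ψhat ω - ψ‖ ^ 2 ∂P)
    (hB : B = ‖ψ - G x‖ ^ 2) :
    (∫ ω, Lf (x - γ • ψhat ω) ∂P) - Lf x ≤
      -(γ / 2) * ‖G x‖ ^ 2 + ℓ * γ ^ 2 / 2 * (V + B)
        + γ * Real.sqrt (‖G x‖ ^ 2) * Real.sqrt B := by
  have hγℓ : ℓ * γ ≤ 1 := by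
    rw [le_div_iff₀ hℓ] at hγ; linarith
  -- pointwise descent bound
  have hdesc : ∀ ω, Lf (x - γ • ψhat ω) ≤
      Lf x - γ * inner ℝ (G x) (ψhat ω) + ℓ / 2 * (γ ^ 2 * ‖ψhat ω‖ ^ 2) := by
    intro ω
    have h := descent_aux Lf G ℓ hℓ hgrad hlip x (x - γ • ψhat ω)
    have h1 : x - γ • ψhat ω - x = -(γ • ψhat ω) := by abel
    rw [h1] at h
    have h2 : (inner ℝ (G x) (-(γ • ψhat ω)) : ℝ) = -(γ * inner ℝ (G x) (ψhat ω)) := by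
      rw [inner_neg_right, real_inner_smul_right]
    have h3 : ‖-(γ • ψhat ω)‖ ^ 2 = γ ^ 2 * ‖ψhat ω‖ ^ 2 := by
      rw [norm_neg, norm_smul, mul_pow, Real.norm_eq_abs, sq_abs]
    rw [h2, h3] at h
    linarith
  -- integrability pieces
  have hsub : Integrable (fun ω => ψhat ω - ψ) P := hψint.sub (integrable_const ψ)
  have hnormsq : Integrable (fun ω => ‖ψhat ω‖ ^ 2) P := by
    have heq : (fun ω => ‖ψhat ω‖ ^ 2) =
        fun ω => ‖ψhat ω - ψ‖ ^ 2 + (2 * inner ℝ (ψhat ω - ψ) ψ + ‖ψ‖ ^ 2) := by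
      funext ω
      have := norm_add_sq_real (ψhat ω - ψ) ψ
      simp only [sub_add_cancel] at this
      linarith
    rw [heq]
    exact hVint.add (((hsub.inner_const ψ).const_mul 2).add (integrable_const _))
  have hinner : Integrable (fun ω => (inner ℝ (G x) (ψhat ω) : ℝ)) P :=
    hψint.const_inner (G x)
  have hRHSint : Integrable
      (fun ω => Lf x - γ * inner ℝ (G x) (ψhat ω) + ℓ / 2 * (γ ^ 2 * ‖ψhat ω‖ ^ 2)) P := by
    exact ((integrable_const (Lf x)).sub (hinner.const_mul γ)).add
      ((hnormsq.const_mul (γ ^ 2)).const_mul (ℓ / 2))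
  -- integral computations
  have hintinner : ∫ ω, (inner ℝ (G x) (ψhat ω) : ℝ) ∂P = inner ℝ (G x) ψ := by
    rw [integral_inner hψint, hmean]
  have hzero : ∫ ω, (ψhat ω - ψ) ∂P = 0 := by
    rw [integral_sub hψint (integrable_const ψ), hmean, integral_const]
    simp
  have hintnormsq : ∫ ω, ‖ψhat ω‖ ^ 2 ∂P = V + ‖ψ‖ ^ 2 := by
    have heq : (fun ω => ‖ψhat ω‖ ^ 2) =
        fun ω => ‖ψhat ω - ψ‖ ^ 2 + (2 * inner ℝ (ψhat ω - ψ) ψ + ‖ψ‖ ^ 2) := by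
      funext ω
      have := norm_add_sq_real (ψhat ω - ψ) ψ
      simp only [sub_add_cancel] at this
      linarith
    have hI2 : Integrable (fun ω => 2 * (inner ℝ (ψhat ω - ψ) ψ : ℝ) + ‖ψ‖ ^ 2) P :=
      ((hsub.inner_const ψ).const_mul 2).add (integrable_const _)
    have hI3 : Integrable (fun ω => 2 * (inner ℝ (ψhat ω - ψ) ψ : ℝ)) P :=
      (hsub.inner_const ψ).const_mul 2
    rw [heq, integral_add hVint hI2, integral_add hI3 (integrable_const _),
      integral_const_mul]
    have : ∫ ω, (inner ℝ (ψhat ω - ψ) ψ : ℝ) ∂P = 0 := by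
      have h := integral_inner (𝕜 := ℝ) hsub ψ
      rw [hzero] at h
      simp only [inner_zero_right] at h
      calc ∫ ω, (inner ℝ (ψhat ω - ψ) ψ : ℝ) ∂P
          = ∫ ω, (inner ℝ ψ (ψhat ω - ψ) : ℝ) ∂P := by
            congr 1; funext ω; rw [real_inner_comm]
        _ = 0 := h
    rw [this, hV, integral_const]
    simp
  -- integrate the pointwise bound
  have hmain : (∫ ω, Lf (x - γ • ψhat ω) ∂P) ≤
      Lf x - γ * inner ℝ (G x) ψ + ℓ / 2 * (γ ^ 2 * (V + ‖ψ‖ ^ 2)) := by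
    calc (∫ ω, Lf (x - γ • ψhat ω) ∂P)
        ≤ ∫ ω, (Lf x - γ * inner ℝ (G x) (ψhat ω) + ℓ / 2 * (γ ^ 2 * ‖ψhat ω‖ ^ 2)) ∂P :=
          integral_mono hLint hRHSint hdesc
      _ = Lf x - γ * inner ℝ (G x) ψ + ℓ / 2 * (γ ^ 2 * (V + ‖ψ‖ ^ 2)) := by
          have hI4 : Integrable (fun ω => Lf x - γ * (inner ℝ (G x) (ψhat ω) : ℝ)) P :=
            (integrable_const (Lf x)).sub (hinner.const_mul γ)
          have hI5 : Integrable (fun ω => ℓ / 2 * (γ ^ 2 * ‖ψhat ω‖ ^ 2)) P :=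
            (hnormsq.const_mul (γ ^ 2)).const_mul (ℓ / 2)
          have hI6 : Integrable (fun ω => γ * (inner ℝ (G x) (ψhat ω) : ℝ)) P :=
            hinner.const_mul γ
          have hI7 : Integrable (fun ω => γ ^ 2 * ‖ψhat ω‖ ^ 2) P :=
            hnormsq.const_mul (γ ^ 2)
          rw [integral_add hI4 hI5,
            integral_sub (integrable_const (Lf x)) hI6,
            integral_const_mul, integral_const_mul, integral_const_mul,
            hintinner, hintnormsq, integral_const]
          simp
  -- final algebra
  set b := ψ - G x with hb
  have hψeq : ψ = G x + b := by rw [hb]; abel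
  have hinner_exp : (inner ℝ (G x) ψ : ℝ) = ‖G x‖ ^ 2 + inner ℝ (G x) b := by
    rw [hψeq, inner_add_right, real_inner_self_eq_norm_sq]
  have hnorm_exp : ‖ψ‖ ^ 2 = ‖G x‖ ^ 2 + 2 * inner ℝ (G x) b + ‖b‖ ^ 2 := by
    rw [hψeq]; exact norm_add_sq_real (G x) b
  have hsq1 : Real.sqrt (‖G x‖ ^ 2) = ‖G x‖ := Real.sqrt_sq (norm_nonneg _)
  have hsq2 : Real.sqrt B = ‖b‖ := by rw [hB, hb]; exact Real.sqrt_sq (norm_nonneg _)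
  have hBb : B = ‖b‖ ^ 2 := by rw [hB, hb]
  have habs : |(inner ℝ (G x) b : ℝ)| ≤ ‖G x‖ * ‖b‖ := abs_real_inner_le_norm _ _
  rw [hsq1, hsq2, hBb]
  rw [hinner_exp, hnorm_exp] at hmain
  have h1 : (inner ℝ (G x) b : ℝ) ≤ ‖G x‖ * ‖b‖ := le_trans (le_abs_self _) habs
  have h2 : -(‖G x‖ * ‖b‖) ≤ (inner ℝ (G x) b : ℝ) := neg_le_of_abs_le habs
  have hA : 0 ≤ γ * (1 - ℓ * γ) * (‖G x‖ * ‖b‖ + (inner ℝ (G x) b : ℝ)) :=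
    mul_nonneg (mul_nonneg hγ0.le (by linarith)) (by linarith)
  have hC : 0 ≤ γ * (ℓ * γ) * (‖G x‖ * ‖b‖) :=
    mul_nonneg (mul_nonneg hγ0.le (mul_nonneg hℓ.le hγ0.le))
      (mul_nonneg (norm_nonneg _) (norm_nonneg _))
  have hD : 0 ≤ γ * (1 - ℓ * γ) * ‖G x‖ ^ 2 :=
    mul_nonneg (mul_nonneg hγ0.le (by linarith)) (sq_nonneg _)
  nlinarith [hA, hC, hD, hmain]
end
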